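/- Let 1/2 ≤ λ ≤ 1, let n ≥ 1, let ψ_{u,v} ∈ ℂⁿ (u,v ∈ {0,1}) be unit vectors, and let Γ : {0,1}² → ℝ be nonnegative and not identically zero. With p_x^y = λ if x = y and 1−λ otherwise, set S = Σ_{r₁,r₂,u,v} p_{r₁}^{u} p_{r₂}^{v} Γ(u,v) and for c ∈ {0,1} define the density matrix ξ_c = (1/S) Σ_{r₁,r₂,u,v ∈ {0,1}} p_{c⊕r₁}^{u} p_{c⊕r₂}^{v} Γ(u,v) · |r₁ r₂⟩⟨r₁ r₂| ⊗ |ψ_{u,v}⟩⟨ψ_{u,v}| on ℂ⁴ ⊗ ℂⁿ. Then the trace distance satisfies D(ξ₀, ξ₁) ≤ 2λ − 1. -/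

import Mathlib

open Matrix Kronecker ComplexOrder

noncomputable section

/-- |v⟩⟨v| : the rank-one outer product v v†. -/
def outer {n : Type*} (v : n → ℂ) : Matrix n n ℂ := Matrix.vecMulVec v (star v)

open Classical in
/-- Square root of a positive semidefinite matrix (junk value 0 if not PSD). -/
def psdSqrt {n : Type*} [Fintype n] [DecidableEq n] (A : Matrix n n ℂ) : Matrix n n ℂ :=
  if h : A.PosSemidef then
    (h.1.eigenvectorUnitary : Matrix n n ℂ) *
      diagonal ((↑) ∘ (Real.sqrt ·) ∘ h.1.eigenvalues) *
      (star h.1.eigenvectorUnitary : Matrix n n ℂ) else 0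

/-- |A| = √(A†A). -/
def matAbs {n : Type*} [Fintype n] [DecidableEq n] (A : Matrix n n ℂ) : Matrix n n ℂ :=
  psdSqrt (Aᴴ * A)

/-- Trace distance D(ρ,σ) = (1/2)·tr |σ - ρ|. -/
def trDist {n : Type*} [Fintype n] [DecidableEq n] (ρ σ : Matrix n n ℂ) : ℝ :=
  (1 / 2) * ((matAbs (σ - ρ)).trace).re

/-- Fidelity F(ρ,σ) = tr √(√ρ · σ · √ρ). -/
def fid {n : Type*} [Fintype n] [DecidableEq n] (ρ σ : Matrix n n ℂ) : ℝ :=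
  ((psdSqrt (psdSqrt ρ * σ * psdSqrt ρ)).trace).re

/-- F(ρ, S) : the maximal fidelity of ρ with members of the set S. -/
def fidSet {n : Type*} [Fintype n] [DecidableEq n]
    (ρ : Matrix n n ℂ) (S : Set (Matrix n n ℂ)) : ℝ :=
  sSup (fid ρ '' S)

/-- The states |φᵇ_c(λ)⟩ in ℂ². -/
def phi (b c : Fin 2) (lam : ℝ) : Fin 2 → ℂ :=
  if b = 0 then
    (if c = 0 then ![(Real.sqrt lam : ℂ), (Real.sqrt (1 - lam) : ℂ)]
     else ![(Real.sqrt (1 - lam) : ℂ), -(Real.sqrt lam : ℂ)])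
  else
    (if c = 0 then ![(Real.sqrt lam : ℂ), -(Real.sqrt (1 - lam) : ℂ)]
     else ![(Real.sqrt (1 - lam) : ℂ), (Real.sqrt lam : ℂ)])

/-- The ensemble L_c(λ) = { p|φ⁰_c⟩⟨φ⁰_c| + (1-p)|φ¹_c⟩⟨φ¹_c| : p ∈ [0,1] }. -/
def Lset (c : Fin 2) (lam : ℝ) : Set (Matrix (Fin 2) (Fin 2) ℂ) :=
  {ρ | ∃ p : ℝ, 0 ≤ p ∧ p ≤ 1 ∧
      ρ = (p : ℂ) • outer (phi 0 c lam) + ((1 - p : ℝ) : ℂ) • outer (phi 1 c lam)}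

/-- p_x^y = λ if x = y, 1 - λ otherwise. -/
def pbit (lam : ℝ) (x y : Fin 2) : ℝ := if x = y then lam else 1 - lam

/-- ρ_c = λ|c⟩⟨c| + (1-λ)|1-c⟩⟨1-c|. -/
def rhoC (lam : ℝ) (c : Fin 2) : Matrix (Fin 2) (Fin 2) ℂ :=
  (lam : ℂ) • outer (Pi.single c 1) + ((1 - lam : ℝ) : ℂ) • outer (Pi.single (1 - c) 1)

/-- Tensor product of two vectors. -/
def vtens {m n : Type*} (v : m → ℂ) (w : n → ℂ) : m × n → ℂ := fun x => v x.1 * w x.2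

end


section AuxLemmas

open Matrix ComplexOrder

lemma outer_posSemidef' {m : Type*} [Fintype m] (v : m → ℂ) : (outer v).PosSemidef := by
  refine Matrix.PosSemidef.of_dotProduct_mulVec_nonneg ?_ ?_
  · ext i j
    simp [outer, Matrix.vecMulVec_apply, Matrix.conjTranspose_apply, mul_comm]
  · intro x
    have h : star x ⬝ᵥ (outer v *ᵥ x) = star (star v ⬝ᵥ x) * (star v ⬝ᵥ x) := by
      calc star x ⬝ᵥ (outer v *ᵥ x)
          = ∑ i, ∑ j, star (x i) * (v i * star (v j) * x j) := by
            simp [outer, dotProduct, Matrix.mulVec, Matrix.vecMulVec_apply, Finset.mul_sum]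
        _ = ∑ i, ∑ j, (star (x i) * v i) * (star (v j) * x j) := by
            exact Finset.sum_congr rfl fun i _ => Finset.sum_congr rfl fun j _ => by ring
        _ = (∑ i, star (x i) * v i) * (∑ j, star (v j) * x j) := by
            rw [← Finset.sum_mul_sum]
        _ = star (star v ⬝ᵥ x) * (star v ⬝ᵥ x) := by
            simp [dotProduct, star_sum, mul_comm]
    rw [h]
    exact star_mul_self_nonneg _

lemma outer_trace' {m : Type*} [Fintype m] (v : m → ℂ) : (outer v).trace = star v ⬝ᵥ v := by
  simp [outer, Matrix.trace, Matrix.diag, Matrix.vecMulVec_apply, dotProduct, mul_comm]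

open Kronecker in
lemma outer_kron' {m p : Type*} (a : m → ℂ) (b : p → ℂ) :
    (outer a) ⊗ₖ (outer b) = outer (fun x : m × p => a x.1 * b x.2) := by
  ext x y
  obtain ⟨x1, x2⟩ := x
  obtain ⟨y1, y2⟩ := y
  simp [outer, Matrix.vecMulVec_apply, Matrix.kroneckerMap_apply, star_mul']
  ring

lemma posSemidef_sum' {ι m : Type*} [Fintype m] (s : Finset ι) (f : ι → Matrix m m ℂ)
    (h : ∀ i ∈ s, (f i).PosSemidef) : (∑ i ∈ s, f i).PosSemidef :=
  Finset.sum_induction f _ (fun a b ha hb => ha.add hb) Matrix.PosSemidef.zero h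

lemma posSemidef_real_smul' {m : Type*} [Fintype m] {M : Matrix m m ℂ} (hM : M.PosSemidef)
    {c : ℝ} (hc : 0 ≤ c) : ((c : ℂ) • M).PosSemidef := by
  refine Matrix.PosSemidef.of_dotProduct_mulVec_nonneg ?_ ?_
  · have h1 := hM.1
    unfold Matrix.IsHermitian at *
    rw [Matrix.conjTranspose_smul, h1]
    congr 1
    simp [Complex.conj_ofReal]
  · intro x
    rw [Matrix.smul_mulVec, dotProduct_smul, smul_eq_mul]
    exact mul_nonneg (by exact_mod_cast hc) (hM.dotProduct_mulVec_nonneg x)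

lemma trace_re_nonneg' {m : Type*} [Fintype m] {M : Matrix m m ℂ} (hM : M.PosSemidef) :
    0 ≤ (M.trace).re := by
  classical
  have h : ∀ i, 0 ≤ (M i i).re := by
    intro i
    have h2 := hM.dotProduct_mulVec_nonneg (Pi.single i 1)
    have hcalc : star (Pi.single i 1 : m → ℂ) ⬝ᵥ (M *ᵥ Pi.single i 1) = M i i := by
      simp [dotProduct, Matrix.mulVec, Pi.single_apply, apply_ite]
    rw [hcalc] at h2
    exact (Complex.le_def.mp h2).1
  have := Finset.sum_nonneg (fun i (_ : i ∈ Finset.univ) => h i)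
  simpa [Matrix.trace, Matrix.diag, Complex.re_sum] using this

lemma trace_mul_proj_nonneg' {m : Type*} [Fintype m] {R M : Matrix m m ℂ}
    (hR : Rᴴ = R) (hRR : R * R = R) (hM : M.PosSemidef) : 0 ≤ ((R * M).trace).re := by
  have h1 : (R * M).trace = (R * M * Rᴴ).trace := by
    rw [hR, Matrix.trace_mul_cycle R M R, hRR]
  rw [h1]
  exact trace_re_nonneg' (hM.mul_mul_conjTranspose_same R)

set_option maxHeartbeats 1000000 in
lemma trace_matAbs_sub_le' {m : Type*} [Fintype m] [DecidableEq m] {P Q : Matrix m m ℂ}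
    (hP : P.PosSemidef) (hQ : Q.PosSemidef) :
    ((matAbs (P - Q)).trace).re ≤ (P.trace).re + (Q.trace).re := by
  have hA : (P - Q).IsHermitian := hP.1.sub hQ.1
  set A := P - Q with hAdef
  set U : Matrix m m ℂ := (hA.eigenvectorUnitary : Matrix m m ℂ) with hUdef
  have hUU' : U * star U = 1 := Matrix.mem_unitaryGroup_iff.mp hA.eigenvectorUnitary.2
  have hUU : star U * U = 1 := Matrix.mem_unitaryGroup_iff'.mp hA.eigenvectorUnitary.2
  set ev := hA.eigenvalues with hev
  set C : (m → ℝ) → Matrix m m ℂ :=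
    fun f => U * Matrix.diagonal (fun i => (f i : ℂ)) * star U with hC
  have hCcongr : ∀ f g : m → ℝ, (∀ i, f i = g i) → C f = C g := fun f g h => by
    rw [show f = g from funext h]
  have hCmul : ∀ f g, C f * C g = C (fun i => f i * g i) := by
    intro f g
    simp only [hC]
    calc U * diagonal (fun i => (f i : ℂ)) * star U * (U * diagonal (fun i => (g i : ℂ)) * star U)
        = U * diagonal (fun i => (f i : ℂ)) * (star U * U) * diagonal (fun i => (g i : ℂ)) * star U := by
          simp only [Matrix.mul_assoc]
      _ = U * (diagonal (fun i => (f i : ℂ)) * diagonal (fun i => (g i : ℂ))) * star U := by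
          rw [hUU]; simp only [Matrix.mul_one, Matrix.mul_assoc]
      _ = U * diagonal (fun i => ((f i * g i : ℝ) : ℂ)) * star U := by
          rw [Matrix.diagonal_mul_diagonal]; push_cast; rfl
  have hCadd : ∀ f g, C f + C g = C (fun i => f i + g i) := by
    intro f g
    simp only [hC]
    rw [← Matrix.add_mul, ← Matrix.mul_add, Matrix.diagonal_add]
    push_cast; rfl
  have hCtrace : ∀ f, (C f).trace = ∑ i, (f i : ℂ) := by
    intro f
    simp only [hC]
    rw [Matrix.trace_mul_cycle, hUU, Matrix.one_mul, Matrix.trace_diagonal]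
  have hCherm : ∀ f, (C f)ᴴ = C f := by
    intro f
    have hD : (Matrix.diagonal fun i => ((f i : ℝ) : ℂ))ᴴ = Matrix.diagonal fun i => ((f i : ℝ) : ℂ) := by
      simp [Matrix.diagonal_conjTranspose, Pi.star_def, Complex.conj_ofReal]
    calc (U * Matrix.diagonal (fun i => ((f i : ℝ) : ℂ)) * star U)ᴴ
        = (star U)ᴴ * ((Matrix.diagonal fun i => ((f i : ℝ) : ℂ))ᴴ * Uᴴ) := by
          rw [Matrix.conjTranspose_mul, Matrix.conjTranspose_mul]
      _ = U * (Matrix.diagonal (fun i => ((f i : ℝ) : ℂ)) * star U) := by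
          rw [hD, Matrix.star_eq_conjTranspose, Matrix.conjTranspose_conjTranspose]
      _ = U * Matrix.diagonal (fun i => ((f i : ℝ) : ℂ)) * star U := by
          rw [Matrix.mul_assoc]
  have hCpsd : ∀ f, (∀ i, 0 ≤ f i) → (C f).PosSemidef := by
    intro f hf
    have hd : (Matrix.diagonal (fun i => (f i : ℂ))).PosSemidef :=
      Matrix.posSemidef_diagonal_iff.mpr fun i => by exact_mod_cast hf i
    have := hd.mul_mul_conjTranspose_same U
    simpa [hC, Matrix.star_eq_conjTranspose] using this
  have hAC : A = C ev := by
    have := hA.spectral_theorem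
    rw [this, Unitary.conjStarAlgAut_apply]
    rfl
  have habs : matAbs A = C (fun i => |ev i|) := by
    have hpsd : (Aᴴ * A).PosSemidef := Matrix.posSemidef_conjTranspose_mul_self A
    have hCcfc : ∀ g : ℝ → ℝ, cfc g A = C (fun i => g (ev i)) := by
      intro g
      rw [hA.cfc_eq, Matrix.IsHermitian.cfc, Unitary.conjStarAlgAut_apply]
      rfl
    have hX : Aᴴ * A = cfc (fun x : ℝ => x * x) A := by
      rw [hCcfc, ← hCmul ev ev, ← hAC, hA.eq]
    rw [matAbs, psdSqrt, dif_pos hpsd]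
    trans cfc Real.sqrt (Aᴴ * A)
    · rw [hpsd.1.cfc_eq, Matrix.IsHermitian.cfc, Unitary.conjStarAlgAut_apply]
      rfl
    · rw [hX]
      refine (cfc_comp Real.sqrt (fun x : ℝ => x * x) A (show IsSelfAdjoint A from hA)).symm.trans ?_
      rw [hCcfc]
      exact hCcongr _ _ fun i => Real.sqrt_mul_self_eq_abs _
  set ep : m → ℝ := fun i => if 0 ≤ ev i then 1 else 0 with hep
  set em : m → ℝ := fun i => if 0 ≤ ev i then 0 else 1 with hem
  have hep_idem : ∀ i, ep i * ep i = ep i := by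
    intro i; by_cases h : 0 ≤ ev i <;> simp [hep, h]
  have hem_idem : ∀ i, em i * em i = em i := by
    intro i; by_cases h : 0 ≤ ev i <;> simp [hem, h]
  have hPp_idem : C ep * C ep = C ep := by rw [hCmul]; exact hCcongr _ _ hep_idem
  have hPm_idem : C em * C em = C em := by rw [hCmul]; exact hCcongr _ _ hem_idem
  have hone : C (fun _ => 1) = 1 := by
    simp only [hC, Complex.ofReal_one]
    rw [Matrix.diagonal_one, Matrix.mul_one, hUU']
  have hsum_proj : C ep + C em = 1 := by
    rw [hCadd, ← hone]
    refine hCcongr _ _ fun i => ?_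
    by_cases h : 0 ≤ ev i <;> simp [hep, hem, h]
  have habs_tr : ((matAbs A).trace).re = ∑ i, |ev i| := by
    rw [habs, hCtrace, Complex.re_sum]
    simp
  have htp : ((C ep * A).trace).re = ∑ i, max (ev i) 0 := by
    rw [hAC, hCmul, hCtrace, Complex.re_sum]
    refine Finset.sum_congr rfl fun i _ => ?_
    simp only [Complex.ofReal_re]
    by_cases h : 0 ≤ ev i
    · simp [hep, h, max_eq_left h]
    · simp [hep, h, max_eq_right (le_of_not_ge h)]
  have htm : ((C em * A).trace).re = ∑ i, min (ev i) 0 := by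
    rw [hAC, hCmul, hCtrace, Complex.re_sum]
    refine Finset.sum_congr rfl fun i _ => ?_
    simp only [Complex.ofReal_re]
    by_cases h : 0 ≤ ev i
    · simp [hem, h, min_eq_right h]
    · simp [hem, h, min_eq_left (le_of_not_ge h)]
  have habs_split : (∑ i, |ev i|) = (∑ i, max (ev i) 0) - ∑ i, min (ev i) 0 := by
    rw [← Finset.sum_sub_distrib]
    refine Finset.sum_congr rfl fun i _ => ?_
    rcases le_total 0 (ev i) with h | h
    · rw [abs_of_nonneg h, max_eq_left h, min_eq_right h]; ring
    · rw [abs_of_nonpos h, max_eq_right h, min_eq_left h]; ring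
  have hsplit : ∀ f, ((C f * A).trace).re = ((C f * P).trace).re - ((C f * Q).trace).re := by
    intro f
    rw [hAdef, Matrix.mul_sub, Matrix.trace_sub, Complex.sub_re]
  have hQp : 0 ≤ ((C ep * Q).trace).re := trace_mul_proj_nonneg' (hCherm ep) hPp_idem hQ
  have hPm : 0 ≤ ((C em * P).trace).re := trace_mul_proj_nonneg' (hCherm em) hPm_idem hP
  have hQm : 0 ≤ ((C em * Q).trace).re := trace_mul_proj_nonneg' (hCherm em) hPm_idem hQ
  have hPp : 0 ≤ ((C ep * P).trace).re := trace_mul_proj_nonneg' (hCherm ep) hPp_idem hP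
  have hPfull : ((C ep * P).trace).re + ((C em * P).trace).re = (P.trace).re := by
    rw [← Complex.add_re, ← Matrix.trace_add, ← Matrix.add_mul, hsum_proj, Matrix.one_mul]
  have hQfull : ((C ep * Q).trace).re + ((C em * Q).trace).re = (Q.trace).re := by
    rw [← Complex.add_re, ← Matrix.trace_add, ← Matrix.add_mul, hsum_proj, Matrix.one_mul]
  have e1 := hsplit ep
  have e2 := hsplit em
  rw [htp] at e1
  rw [htm] at e2
  rw [habs_tr, habs_split]
  linarith

end AuxLemmas

set_option maxHeartbeats 1600000 in
open Kronecker in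
/-- Loss tolerance against Bob: for the post-selected states ξ_c on ℂ⁴ ⊗ ℂⁿ built from a
nonnegative, not identically zero Γ and unit vectors ψ_{u,v}, D(ξ₀, ξ₁) ≤ 2λ - 1. -/
theorem stmt10 (lam : ℝ) (h0 : 1 / 2 ≤ lam) (h1 : lam ≤ 1)
    (n : ℕ) (hn : 1 ≤ n)
    (ψ : Fin 2 → Fin 2 → Fin n → ℂ)
    (hψ : ∀ u v, star (ψ u v) ⬝ᵥ ψ u v = 1)
    (Γ : Fin 2 → Fin 2 → ℝ) (hΓ : ∀ u v, 0 ≤ Γ u v) (hΓne : ∃ u v, Γ u v ≠ 0)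
    (S : ℝ)
    (hS : S = ∑ r₁ : Fin 2, ∑ r₂ : Fin 2, ∑ u : Fin 2, ∑ v : Fin 2,
        pbit lam r₁ u * pbit lam r₂ v * Γ u v)
    (ξ : Fin 2 → Matrix ((Fin 2 × Fin 2) × Fin n) ((Fin 2 × Fin 2) × Fin n) ℂ)
    (hξ : ξ = fun c => ((1 / S : ℝ) : ℂ) •
        ∑ r₁ : Fin 2, ∑ r₂ : Fin 2, ∑ u : Fin 2, ∑ v : Fin 2,
          ((pbit lam (c + r₁) u * pbit lam (c + r₂) v * Γ u v : ℝ) : ℂ) •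
            (outer (Pi.single ((r₁, r₂) : Fin 2 × Fin 2) (1 : ℂ)) ⊗ₖ outer (ψ u v))) :
    trDist (ξ 0) (ξ 1) ≤ 2 * lam - 1 := by
    classical
  have hS' : S = Γ 0 0 + Γ 0 1 + Γ 1 0 + Γ 1 1 := by
    rw [hS]
    simp [Fin.sum_univ_two, pbit]
    ring
  have hSpos : 0 < S := by
    obtain ⟨u₀, v₀, hne⟩ := hΓne
    have h00 := hΓ 0 0; have h01 := hΓ 0 1; have h10 := hΓ 1 0; have h11 := hΓ 1 1
    have huv : 0 < Γ u₀ v₀ := lt_of_le_of_ne (hΓ u₀ v₀) (Ne.symm hne)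
    rw [hS']
    fin_cases u₀ <;> fin_cases v₀ <;> simp at huv <;> linarith
  have h2 : 0 ≤ 2 * lam - 1 := by linarith
  have k00 : 0 ≤ (2 * lam - 1) * Γ 0 0 := mul_nonneg h2 (hΓ 0 0)
  have k01 : 0 ≤ (2 * lam - 1) * Γ 0 1 := mul_nonneg h2 (hΓ 0 1)
  have k10 : 0 ≤ (2 * lam - 1) * Γ 1 0 := mul_nonneg h2 (hΓ 1 0)
  have k11 : 0 ≤ (2 * lam - 1) * Γ 1 1 := mul_nonneg h2 (hΓ 1 1)
  have hpointP : ∀ r₁ r₂ u v : Fin 2,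
      max (pbit lam (1 + r₁) u * pbit lam (1 + r₂) v * Γ u v
        - pbit lam (0 + r₁) u * pbit lam (0 + r₂) v * Γ u v) 0
      = if r₁ = u ∨ r₂ = v then 0 else (2 * lam - 1) * Γ u v := by
    simp only [Fin.forall_fin_two]
    simp [pbit]
    repeat' apply And.intro
    all_goals try nlinarith [k00, k01, k10, k11]
    all_goals (rw [max_eq_left (by nlinarith [k00, k01, k10, k11])]; ring)
  have hpointQ : ∀ r₁ r₂ u v : Fin 2,
      max (pbit lam (0 + r₁) u * pbit lam (0 + r₂) v * Γ u v
        - pbit lam (1 + r₁) u * pbit lam (1 + r₂) v * Γ u v) 0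
      = if r₁ = u ∧ r₂ = v then (2 * lam - 1) * Γ u v else 0 := by
    simp only [Fin.forall_fin_two]
    simp [pbit]
    repeat' apply And.intro
    all_goals try nlinarith [k00, k01, k10, k11]
    all_goals (rw [max_eq_left (by nlinarith [k00, k01, k10, k11])]; ring)
  set P : Matrix ((Fin 2 × Fin 2) × Fin n) ((Fin 2 × Fin 2) × Fin n) ℂ :=
    ∑ r₁ : Fin 2, ∑ r₂ : Fin 2, ∑ u : Fin 2, ∑ v : Fin 2,
      ((1 / S * max (pbit lam (1 + r₁) u * pbit lam (1 + r₂) v * Γ u v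
          - pbit lam (0 + r₁) u * pbit lam (0 + r₂) v * Γ u v) 0 : ℝ) : ℂ) •
        (outer (Pi.single ((r₁, r₂) : Fin 2 × Fin 2) (1 : ℂ)) ⊗ₖ outer (ψ u v)) with hPdef
  set Q : Matrix ((Fin 2 × Fin 2) × Fin n) ((Fin 2 × Fin 2) × Fin n) ℂ :=
    ∑ r₁ : Fin 2, ∑ r₂ : Fin 2, ∑ u : Fin 2, ∑ v : Fin 2,
      ((1 / S * max (pbit lam (0 + r₁) u * pbit lam (0 + r₂) v * Γ u v
          - pbit lam (1 + r₁) u * pbit lam (1 + r₂) v * Γ u v) 0 : ℝ) : ℂ) •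
        (outer (Pi.single ((r₁, r₂) : Fin 2 × Fin 2) (1 : ℂ)) ⊗ₖ outer (ψ u v)) with hQdef
  have key : ξ 1 - ξ 0 = P - Q := by
    rw [hξ, hPdef, hQdef]
    simp only
    rw [← smul_sub]
    simp only [← Finset.sum_sub_distrib, Finset.smul_sum]
    refine Finset.sum_congr rfl fun r₁ _ => Finset.sum_congr rfl fun r₂ _ =>
      Finset.sum_congr rfl fun u _ => Finset.sum_congr rfl fun v _ => ?_
    rw [← sub_smul, smul_smul, ← sub_smul]
    congr 1
    norm_cast
    rw [show pbit lam (0 + r₁) u * pbit lam (0 + r₂) v * Γ u v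
          - pbit lam (1 + r₁) u * pbit lam (1 + r₂) v * Γ u v
        = -(pbit lam (1 + r₁) u * pbit lam (1 + r₂) v * Γ u v
          - pbit lam (0 + r₁) u * pbit lam (0 + r₂) v * Γ u v) from by ring]
    linear_combination (-(1 / S)) * max_zero_sub_max_neg_zero_eq_self
      (pbit lam (1 + r₁) u * pbit lam (1 + r₂) v * Γ u v
        - pbit lam (0 + r₁) u * pbit lam (0 + r₂) v * Γ u v)
  have hPpsd : P.PosSemidef := by
    rw [hPdef]
    refine posSemidef_sum' _ _ fun r₁ _ => posSemidef_sum' _ _ fun r₂ _ =>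
      posSemidef_sum' _ _ fun u _ => posSemidef_sum' _ _ fun v _ => ?_
    refine posSemidef_real_smul' ?_ (mul_nonneg (by positivity) (le_max_right _ _))
    rw [outer_kron']
    exact outer_posSemidef' _
  have hQpsd : Q.PosSemidef := by
    rw [hQdef]
    refine posSemidef_sum' _ _ fun r₁ _ => posSemidef_sum' _ _ fun r₂ _ =>
      posSemidef_sum' _ _ fun u _ => posSemidef_sum' _ _ fun v _ => ?_
    refine posSemidef_real_smul' ?_ (mul_nonneg (by positivity) (le_max_right _ _))
    rw [outer_kron']
    exact outer_posSemidef' _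
  have htr : ∀ (r₁ r₂ u v : Fin 2),
      ((outer (Pi.single ((r₁, r₂) : Fin 2 × Fin 2) (1:ℂ)) ⊗ₖ outer (ψ u v))).trace = 1 := by
    intro r₁ r₂ u v
    rw [Matrix.trace_kronecker, outer_trace', outer_trace', hψ u v]
    simp [dotProduct, Pi.single_apply, apply_ite]
  have hPtr : (P.trace).re = 2 * lam - 1 := by
    rw [hPdef]
    simp only [Matrix.trace_sum, Matrix.trace_smul, htr, smul_eq_mul, mul_one,
      Complex.re_sum, Complex.ofReal_re]
    simp only [hpointP]
    rw [show (∑ r₁ : Fin 2, ∑ r₂ : Fin 2, ∑ u : Fin 2, ∑ v : Fin 2,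
        1 / S * (if r₁ = u ∨ r₂ = v then 0 else (2 * lam - 1) * Γ u v))
        = 1 / S * ((2 * lam - 1) * S) from ?_]
    · field_simp
    · rw [hS']
      simp [Fin.sum_univ_two]
      ring
  have hQtr : (Q.trace).re = 2 * lam - 1 := by
    rw [hQdef]
    simp only [Matrix.trace_sum, Matrix.trace_smul, htr, smul_eq_mul, mul_one,
      Complex.re_sum, Complex.ofReal_re]
    simp only [hpointQ]
    rw [show (∑ r₁ : Fin 2, ∑ r₂ : Fin 2, ∑ u : Fin 2, ∑ v : Fin 2,
        1 / S * (if r₁ = u ∧ r₂ = v then (2 * lam - 1) * Γ u v else 0))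
        = 1 / S * ((2 * lam - 1) * S) from ?_]
    · field_simp
    · rw [hS']
      simp [Fin.sum_univ_two]
      ring
  have hb := trace_matAbs_sub_le' hPpsd hQpsd
  unfold trDist
  rw [key]
  rw [hPtr, hQtr] at hb
  linarith
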